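/- arXiv:1012.1557 — 3 statements merged into one kernel-verified Lean document; each statement's English description precedes it below -/
import Mathlib

section
/- In the Yokonuma-Temperley-Lieb algebra YTL_{d,n}(u), the elements l_i = (g_i + 1)/(u+1) satisfy l_i l_{i±1} l_i = ((u-1)e_i + 1)/(u+1)^2 · l_i. -/
noncomputable section

open scoped BigOperators

inductive YHGen (n : ℕ) : Type
  | t : Fin n → YHGen n
  | g : Fin (n - 1) → YHGen n

namespace YH

variable {n : ℕ}

/-- The framing generator `t_j` (0-based) in the free algebra. -/
def T (j : Fin n) : FreeAlgebra ℂ (YHGen n) := FreeAlgebra.ι ℂ (YHGen.t j)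

/-- The braiding generator `g_i` (0-based) in the free algebra. -/
def G (i : Fin (n - 1)) : FreeAlgebra ℂ (YHGen n) := FreeAlgebra.ι ℂ (YHGen.g i)

/-- The index `i` viewed in `Fin n`. -/
def lo (i : Fin (n - 1)) : Fin n := ⟨i.val, by have := i.isLt; omega⟩

/-- The index `i+1` viewed in `Fin n`. -/
def hi (i : Fin (n - 1)) : Fin n := ⟨i.val + 1, by have := i.isLt; omega⟩

/-- The idempotent `e_i = (1/d) ∑ t_i^m t_{i+1}^{-m}` (with `t^{-m} = t^{d-m}`). -/
def E (d : ℕ) (i : Fin (n - 1)) : FreeAlgebra ℂ (YHGen n) :=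
  (d : ℂ)⁻¹ • ∑ m ∈ Finset.range d, T (lo i) ^ m * T (hi i) ^ (d - m)

/-- Defining relations of the Yokonuma–Hecke algebra `Y_{d,n}(u)`. -/
inductive Rel (d n : ℕ) (u : ℂ) : FreeAlgebra ℂ (YHGen n) → FreeAlgebra ℂ (YHGen n) → Prop
  | tpow (j : Fin n) : Rel d n u (T j ^ d) 1
  | tcomm (j j' : Fin n) : Rel d n u (T j * T j') (T j' * T j)
  | gtlo (i : Fin (n - 1)) : Rel d n u (G i * T (lo i)) (T (hi i) * G i)
  | gthi (i : Fin (n - 1)) : Rel d n u (G i * T (hi i)) (T (lo i) * G i)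
  | gtfar (i : Fin (n - 1)) (j : Fin n) (h1 : j ≠ lo i) (h2 : j ≠ hi i) :
      Rel d n u (G i * T j) (T j * G i)
  | gfar (i j : Fin (n - 1)) (h : i.val + 1 < j.val ∨ j.val + 1 < i.val) :
      Rel d n u (G i * G j) (G j * G i)
  | braid (i : Fin (n - 1)) (h : i.val + 1 < n - 1) :
      Rel d n u (G i * G ⟨i.val + 1, h⟩ * G i) (G ⟨i.val + 1, h⟩ * G i * G ⟨i.val + 1, h⟩)
  | quad (i : Fin (n - 1)) : Rel d n u (G i * G i) (1 + (u - 1) • (E d i * (1 + G i)))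

end YH

/-- The Yokonuma–Hecke algebra `Y_{d,n}(u)`. -/
abbrev YH (d n : ℕ) (u : ℂ) := RingQuot (YH.Rel d n u)

namespace YH

variable {d n : ℕ} {u : ℂ}

/-- The generator `t_j` of `Y_{d,n}(u)`. -/
def tY (d : ℕ) (u : ℂ) (j : Fin n) : YH d n u := RingQuot.mkAlgHom ℂ (Rel d n u) (T j)

/-- The generator `g_i` of `Y_{d,n}(u)`. -/
def gY (d : ℕ) (u : ℂ) (i : Fin (n - 1)) : YH d n u := RingQuot.mkAlgHom ℂ (Rel d n u) (G i)

/-- The idempotent `e_i` of `Y_{d,n}(u)`. -/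
def eY (d : ℕ) (u : ℂ) (i : Fin (n - 1)) : YH d n u := RingQuot.mkAlgHom ℂ (Rel d n u) (E d i)

end YH

namespace YTL

/-- Defining relations of the Yokonuma–Temperley–Lieb algebra: those of `Y_{d,n}(u)` together
with the linear relations `g_i g_{i+1} g_i = -(g_i g_{i+1}) - g_{i+1} g_i - g_i - g_{i+1} - 1`. -/
inductive Rel (d n : ℕ) (u : ℂ) : FreeAlgebra ℂ (YHGen n) → FreeAlgebra ℂ (YHGen n) → Prop
  | yh {a b : FreeAlgebra ℂ (YHGen n)} : YH.Rel d n u a b → Rel d n u a b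
  | lin (i : Fin (n - 1)) (h : i.val + 1 < n - 1) :
      Rel d n u (YH.G i * YH.G ⟨i.val + 1, h⟩ * YH.G i)
        (-(YH.G i * YH.G ⟨i.val + 1, h⟩) - YH.G ⟨i.val + 1, h⟩ * YH.G i
          - YH.G i - YH.G ⟨i.val + 1, h⟩ - 1)

end YTL

/-- The Yokonuma–Temperley–Lieb algebra `YTL_{d,n}(u)`, the quotient of `Y_{d,n}(u)` by the
two-sided ideal generated by `g_i g_{i+1} g_i + g_i g_{i+1} + g_{i+1} g_i + g_i + g_{i+1} + 1`. -/
abbrev YTL (d n : ℕ) (u : ℂ) := RingQuot (YTL.Rel d n u)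

namespace YTL

variable {n : ℕ}

/-- The generator `t_j` of `YTL_{d,n}(u)`. -/
noncomputable def tL (d : ℕ) (u : ℂ) (j : Fin n) : YTL d n u :=
  RingQuot.mkAlgHom ℂ (Rel d n u) (YH.T j)

/-- The generator `g_i` of `YTL_{d,n}(u)`. -/
noncomputable def gL (d : ℕ) (u : ℂ) (i : Fin (n - 1)) : YTL d n u :=
  RingQuot.mkAlgHom ℂ (Rel d n u) (YH.G i)

/-- The idempotent `e_i` of `YTL_{d,n}(u)`. -/
noncomputable def eL (d : ℕ) (u : ℂ) (i : Fin (n - 1)) : YTL d n u :=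
  RingQuot.mkAlgHom ℂ (Rel d n u) (YH.E d i)

/-- The non-invertible generator `l_i := (g_i + 1)/(u+1)` of `YTL_{d,n}(u)`. -/
noncomputable def lL (d : ℕ) (u : ℂ) (i : Fin (n - 1)) : YTL d n u :=
  (u + 1)⁻¹ • (gL d u i + 1)

end YTL

/-- In `YTL_{d,n}(u)` the elements `l_i = (g_i+1)/(u+1)` satisfy
`l_i l_{i±1} l_i = ((u-1) e_i + 1)/(u+1)² · l_i`. -/
theorem ytl_l_lil (d n : ℕ) (u : ℂ) (hu0 : u ≠ 0) (hu1 : u ≠ 1) (hum1 : u ≠ -1)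
    (i : Fin (n - 1)) (h : i.val + 1 < n - 1) :
    YTL.lL d u i * YTL.lL d u ⟨i.val + 1, h⟩ * YTL.lL d u i
      = (((u + 1) ^ 2)⁻¹) • (((u - 1) • YTL.eL d u i + 1) * YTL.lL d u i) ∧
    YTL.lL d u ⟨i.val + 1, h⟩ * YTL.lL d u i * YTL.lL d u ⟨i.val + 1, h⟩
      = (((u + 1) ^ 2)⁻¹) • (((u - 1) • YTL.eL d u ⟨i.val + 1, h⟩ + 1)
          * YTL.lL d u ⟨i.val + 1, h⟩) := by
  set A := YTL.gL d u i with hA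
  set B := YTL.gL d u ⟨i.val + 1, h⟩ with hB
  set E := YTL.eL d u i with hE
  set E' := YTL.eL d u ⟨i.val + 1, h⟩ with hE'
  have hlin : A * B * A = -(A * B) - B * A - A - B - 1 := by
    have := RingQuot.mkAlgHom_rel ℂ (YTL.Rel.lin (d := d) (u := u) i h)
    simpa [hA, hB, YTL.gL, map_mul, map_add, map_sub, map_neg, map_one] using this
  have hquadA : A * A = 1 + (u - 1) • (E * (1 + A)) := by
    have := RingQuot.mkAlgHom_rel ℂ (YTL.Rel.yh (YH.Rel.quad (d := d) (u := u) i))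
    simpa [hA, hE, YTL.gL, YTL.eL, map_mul, map_add, map_smul, map_one] using this
  have hquadB : B * B = 1 + (u - 1) • (E' * (1 + B)) := by
    have := RingQuot.mkAlgHom_rel ℂ
      (YTL.Rel.yh (YH.Rel.quad (d := d) (u := u) ⟨i.val + 1, h⟩))
    simpa [hB, hE', YTL.gL, YTL.eL, map_mul, map_add, map_smul, map_one] using this
  have hbraid : A * B * A = B * A * B := by
    have := RingQuot.mkAlgHom_rel ℂ (YTL.Rel.yh (YH.Rel.braid (d := d) (u := u) i h))
    simpa [hA, hB, YTL.gL, map_mul] using this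
  have key1 : (A + 1) * (B + 1) * (A + 1) = ((u - 1) • E + 1) * (A + 1) := by
    have expand : (A + 1) * (B + 1) * (A + 1)
        = A * B * A + A * A + B * A + A * B + A + A + B + 1 := by noncomm_ring
    rw [expand, hlin, hquadA]
    simp only [mul_add, add_mul, mul_one, one_mul, smul_mul_assoc, smul_add]
    abel
  have key2 : (B + 1) * (A + 1) * (B + 1) = ((u - 1) • E' + 1) * (B + 1) := by
    have expand : (B + 1) * (A + 1) * (B + 1)
        = B * A * B + B * B + A * B + B * A + B + B + A + 1 := by noncomm_ring
    rw [expand, ← hbraid, hlin, hquadB]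
    simp only [mul_add, add_mul, mul_one, one_mul, smul_mul_assoc, smul_add]
    abel
  constructor
  · show (u + 1)⁻¹ • (A + 1) * ((u + 1)⁻¹ • (B + 1)) * ((u + 1)⁻¹ • (A + 1))
      = ((u + 1) ^ 2)⁻¹ • (((u - 1) • E + 1) * ((u + 1)⁻¹ • (A + 1)))
    simp only [smul_mul_assoc, mul_smul_comm, smul_smul]
    rw [key1]
    congr 1
    field_simp
  · show (u + 1)⁻¹ • (B + 1) * ((u + 1)⁻¹ • (A + 1)) * ((u + 1)⁻¹ • (B + 1))
      = ((u + 1) ^ 2)⁻¹ • (((u - 1) • E' + 1) * ((u + 1)⁻¹ • (B + 1)))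
    simp only [smul_mul_assoc, mul_smul_comm, smul_smul]
    rw [key2]
    congr 1
    field_simp
end
end

section
/- The Juyumaya trace tr on the quadratic relation: for a monomial w = t_1^{k_1} t_2^{k_2} t_3^{k} in Y_{d,3}(u), one has tr(w g_1 g_2 g_1) = z x_{k_1+k} x_{k_2} + (u-1) z E_d^{(k_1+k_2+k)} + (u-1) z^2 x_{k_1+k_2+k}, where E_d^{(m)} := tr(e_1 t_1^m) (equivalently (1/d) Σ_{s=0}^{d-1} x_{m+s} x_{d-s} with indices mod d and x_0 = 1). -/
noncomputable section

open scoped BigOperators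

/-- Generators of the inductive-limit Yokonuma–Hecke algebra `Y_{d,∞}(u)`:
framing generators `t_j` and braiding generators `g_i` (0-based indices). -/
inductive YIGen : Type
  | t : ℕ → YIGen
  | g : ℕ → YIGen

namespace YInf

/-- The framing generator `t_j` in the free algebra. -/
def T (j : ℕ) : FreeAlgebra ℂ YIGen := FreeAlgebra.ι ℂ (YIGen.t j)

/-- The braiding generator `g_i` in the free algebra. -/
def G (i : ℕ) : FreeAlgebra ℂ YIGen := FreeAlgebra.ι ℂ (YIGen.g i)

/-- The idempotent `e_i = (1/d) ∑ t_i^m t_{i+1}^{-m}` (with `t^{-m} = t^{d-m}`). -/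
def E (d : ℕ) (i : ℕ) : FreeAlgebra ℂ YIGen :=
  (d : ℂ)⁻¹ • ∑ m ∈ Finset.range d, T i ^ m * T (i + 1) ^ (d - m)

/-- Defining relations of the Yokonuma–Hecke algebra on infinitely many strands. -/
inductive Rel (d : ℕ) (u : ℂ) : FreeAlgebra ℂ YIGen → FreeAlgebra ℂ YIGen → Prop
  | tpow (j : ℕ) : Rel d u (T j ^ d) 1
  | tcomm (j j' : ℕ) : Rel d u (T j * T j') (T j' * T j)
  | gtlo (i : ℕ) : Rel d u (G i * T i) (T (i + 1) * G i)
  | gthi (i : ℕ) : Rel d u (G i * T (i + 1)) (T i * G i)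
  | gtfar (i j : ℕ) (h1 : j ≠ i) (h2 : j ≠ i + 1) : Rel d u (G i * T j) (T j * G i)
  | gfar (i j : ℕ) (h : i + 1 < j ∨ j + 1 < i) : Rel d u (G i * G j) (G j * G i)
  | braid (i : ℕ) : Rel d u (G i * G (i + 1) * G i) (G (i + 1) * G i * G (i + 1))
  | quad (i : ℕ) : Rel d u (G i * G i) (1 + (u - 1) • (E d i * (1 + G i)))

end YInf

/-- The inductive-limit Yokonuma–Hecke algebra `Y_{d,∞}(u) = ⋃ₙ Y_{d,n}(u)`. -/
abbrev YInf (d : ℕ) (u : ℂ) := RingQuot (YInf.Rel d u)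

namespace YInf

/-- The generator `t_j` of `Y_{d,∞}(u)`. -/
def tI (d : ℕ) (u : ℂ) (j : ℕ) : YInf d u := RingQuot.mkAlgHom ℂ (Rel d u) (T j)

/-- The generator `g_i` of `Y_{d,∞}(u)`. -/
def gI (d : ℕ) (u : ℂ) (i : ℕ) : YInf d u := RingQuot.mkAlgHom ℂ (Rel d u) (G i)

/-- The idempotent `e_i` of `Y_{d,∞}(u)`. -/
def eI (d : ℕ) (u : ℂ) (i : ℕ) : YInf d u := RingQuot.mkAlgHom ℂ (Rel d u) (E d i)

/-- The subalgebra `Y_{d,m}(u) ⊆ Y_{d,∞}(u)`, generated by `t_0, …, t_{m-1}` and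
`g_0, …, g_{m-2}` (0-based; paper indices `t_1, …, t_m`, `g_1, …, g_{m-1}`). -/
def level (d : ℕ) (u : ℂ) (m : ℕ) : Subalgebra ℂ (YInf d u) :=
  Algebra.adjoin ℂ ({x | ∃ j < m, x = tI d u j} ∪ {x | ∃ i, i + 1 < m ∧ x = gI d u i})

end YInf

namespace YInf

variable {d : ℕ} {u : ℂ}

lemma tI_pow_d (j : ℕ) : tI d u j ^ d = 1 := by
  have h := RingQuot.mkAlgHom_rel ℂ (Rel.tpow (d := d) (u := u) j)
  simpa [tI, map_pow, map_one] using h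

lemma tI_comm (j j' : ℕ) : tI d u j * tI d u j' = tI d u j' * tI d u j := by
  have h := RingQuot.mkAlgHom_rel ℂ (Rel.tcomm (d := d) (u := u) j j')
  simpa [tI, map_mul] using h

lemma gI_tI_lo (i : ℕ) : gI d u i * tI d u i = tI d u (i + 1) * gI d u i := by
  have h := RingQuot.mkAlgHom_rel ℂ (Rel.gtlo (d := d) (u := u) i)
  simpa [tI, gI, map_mul] using h

lemma gI_tI_far (i j : ℕ) (h1 : j ≠ i) (h2 : j ≠ i + 1) :
    gI d u i * tI d u j = tI d u j * gI d u i := by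
  have h := RingQuot.mkAlgHom_rel ℂ (Rel.gtfar (d := d) (u := u) i j h1 h2)
  simpa [tI, gI, map_mul] using h

lemma braidI (i : ℕ) :
    gI d u i * gI d u (i + 1) * gI d u i = gI d u (i + 1) * gI d u i * gI d u (i + 1) := by
  have h := RingQuot.mkAlgHom_rel ℂ (Rel.braid (d := d) (u := u) i)
  simpa [gI, map_mul] using h

lemma quadI (i : ℕ) :
    gI d u i * gI d u i = 1 + (u - 1) • (eI d u i * (1 + gI d u i)) := by
  have h := RingQuot.mkAlgHom_rel ℂ (Rel.quad (d := d) (u := u) i)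
  simpa [gI, eI, map_mul, map_add, map_one, map_smul] using h

lemma eI_expand (i : ℕ) :
    eI d u i = (d : ℂ)⁻¹ • ∑ m ∈ Finset.range d,
      tI d u i ^ m * tI d u (i + 1) ^ (d - m) := by
  simp [eI, E, map_smul, map_sum, map_mul, map_pow, tI]

lemma tIpow_gI (i a : ℕ) : tI d u (i + 1) ^ a * gI d u i = gI d u i * tI d u i ^ a := by
  induction a with
  | zero => simp
  | succ n ih =>
      rw [pow_succ, mul_assoc, ← gI_tI_lo, ← mul_assoc, ih, mul_assoc, ← pow_succ]

lemma tIpow_gI' (i a : ℕ) (y : YInf d u) :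
    tI d u (i + 1) ^ a * (gI d u i * y) = gI d u i * (tI d u i ^ a * y) := by
  rw [← mul_assoc, tIpow_gI, mul_assoc]

lemma tIpow_gI_far (i j a : ℕ) (h1 : j ≠ i) (h2 : j ≠ i + 1) :
    tI d u j ^ a * gI d u i = gI d u i * tI d u j ^ a := by
  have hc : Commute (gI d u i) (tI d u j) := gI_tI_far i j h1 h2
  exact (hc.pow_right a).eq.symm

lemma tI_pow_comm (j j' a b : ℕ) :
    tI d u j ^ a * tI d u j' ^ b = tI d u j' ^ b * tI d u j ^ a := by
  have hc : Commute (tI d u j) (tI d u j') := tI_comm j j'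
  exact (hc.pow_pow a b).eq

lemma tt_mul_tt (a b c e : ℕ) :
    (tI d u 0 ^ a * tI d u 1 ^ b) * (tI d u 0 ^ c * tI d u 1 ^ e)
      = tI d u 0 ^ (a + c) * tI d u 1 ^ (b + e) := by
  rw [pow_add, pow_add, mul_assoc, ← mul_assoc (tI d u 1 ^ b), tI_pow_comm 1 0 b c]
  noncomm_ring

lemma tI_mem {m j : ℕ} (h : j < m) : tI d u j ∈ level d u m :=
  Algebra.subset_adjoin (Or.inl ⟨j, h, rfl⟩)

lemma gI_mem {m i : ℕ} (h : i + 1 < m) : gI d u i ∈ level d u m :=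
  Algebra.subset_adjoin (Or.inr ⟨i, h, rfl⟩)

lemma sum_range_eq_sum_zmod [NeZero d] (F : ZMod d → ℂ) :
    ∑ m ∈ Finset.range d, F (m : ZMod d) = ∑ s : ZMod d, F s := by
  exact Finset.sum_nbij' (fun m => (m : ZMod d)) (fun s => s.val)
    (by simp) (by intro s _; simpa using (ZMod.val_lt s))
    (by intro m hm; simp [ZMod.val_natCast_of_lt (Finset.mem_range.mp hm)])
    (by intro s _; simp [ZMod.natCast_val, ZMod.cast_id]) (by simp)

end YInf

/-- For any Juyumaya trace `tr` on `Y_{d,∞}(u)` (a linear functional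
satisfying the trace, normalization, Markov and framing properties) and any monomial
`w = t_1^{k_1} t_2^{k_2} t_3^{k}` (0-based: `t_0^{k_1} t_1^{k_2} t_2^{k}`), one has
`tr(w g_1 g_2 g_1) = z x_{k_1+k} x_{k_2} + (u-1) z E_d^{(k_1+k_2+k)} + (u-1) z² x_{k_1+k_2+k}`,
where `E_d^{(m)} = tr(e_1 t_1^m)` and indices of `x` are taken mod `d`, with `x_0 = 1`. -/
theorem juyumaya_trace_on_monomial (d : ℕ) (hd : 1 ≤ d) (u : ℂ) (hu0 : u ≠ 0) (hu1 : u ≠ 1)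
    (z : ℂ) (x : ZMod d → ℂ) (hx0 : x 0 = 1)
    (tr : YInf d u →ₗ[ℂ] ℂ)
    (htrace : ∀ a b : YInf d u, tr (a * b) = tr (b * a))
    (hone : tr 1 = 1)
    (hmarkov : ∀ m : ℕ, ∀ a b : YInf d u, a ∈ YInf.level d u (m + 1) →
      b ∈ YInf.level d u (m + 1) → tr (a * YInf.gI d u m * b) = z * tr (a * b))
    (hframing : ∀ m s : ℕ, 1 ≤ s → s ≤ d - 1 → ∀ a ∈ YInf.level d u m,
      tr (a * YInf.tI d u m ^ s) = x (s : ZMod d) * tr a)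
    (k₁ k₂ k : ℕ) :
    tr (YInf.tI d u 0 ^ k₁ * YInf.tI d u 1 ^ k₂ * YInf.tI d u 2 ^ k *
        (YInf.gI d u 0 * YInf.gI d u 1 * YInf.gI d u 0))
      = z * x ((k₁ + k : ℕ) : ZMod d) * x ((k₂ : ℕ) : ZMod d)
        + (u - 1) * z * tr (YInf.eI d u 0 * YInf.tI d u 0 ^ (k₁ + k₂ + k))
        + (u - 1) * z ^ 2 * x ((k₁ + k₂ + k : ℕ) : ZMod d) := by
  have hd0 : 0 < d := hd
  haveI : NeZero d := ⟨hd0.ne'⟩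
  have hdC : (d : ℂ) ≠ 0 := Nat.cast_ne_zero.mpr hd0.ne'
  -- basic trace values
  have trT : ∀ a : ℕ, tr (YInf.tI d u 0 ^ a) = x (a : ZMod d) := by
    intro a
    have hsplit : YInf.tI d u 0 ^ a = YInf.tI d u 0 ^ (a % d) := by
      conv_lhs => rw [← Nat.div_add_mod a d]
      rw [pow_add, pow_mul, YInf.tI_pow_d, one_pow, one_mul]
    have hcast : ((a : ℕ) : ZMod d) = ((a % d : ℕ) : ZMod d) := (ZMod.natCast_mod a d).symm
    rcases Nat.eq_zero_or_pos (a % d) with h0 | hpos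
    · rw [hsplit, h0, pow_zero, hone, hcast, h0, Nat.cast_zero, hx0]
    · have hle : a % d ≤ d - 1 := Nat.le_pred_of_lt (Nat.mod_lt _ hd0)
      have h := hframing 0 (a % d) hpos hle 1 (one_mem _)
      rw [one_mul, hone, mul_one] at h
      rw [hsplit, h, hcast]
  have trTT : ∀ a b : ℕ, tr (YInf.tI d u 0 ^ a * YInf.tI d u 1 ^ b)
      = x (b : ZMod d) * x (a : ZMod d) := by
    intro a b
    have hsplit : YInf.tI d u 1 ^ b = YInf.tI d u 1 ^ (b % d) := by
      conv_lhs => rw [← Nat.div_add_mod b d]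
      rw [pow_add, pow_mul, YInf.tI_pow_d, one_pow, one_mul]
    have hcast : ((b : ℕ) : ZMod d) = ((b % d : ℕ) : ZMod d) := (ZMod.natCast_mod b d).symm
    rcases Nat.eq_zero_or_pos (b % d) with h0 | hpos
    · rw [hsplit, h0, pow_zero, mul_one, trT, hcast, h0, Nat.cast_zero, hx0, one_mul]
    · have hle : b % d ≤ d - 1 := Nat.le_pred_of_lt (Nat.mod_lt _ hd0)
      have h := hframing 1 (b % d) hpos hle (YInf.tI d u 0 ^ a)
        (pow_mem (YInf.tI_mem (by omega)) a)
      rw [hsplit, h, trT, hcast]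
  have trTGT : ∀ a b : ℕ, tr (YInf.tI d u 0 ^ a * YInf.gI d u 0 * YInf.tI d u 0 ^ b)
      = z * x ((a + b : ℕ) : ZMod d) := by
    intro a b
    have h := hmarkov 0 (YInf.tI d u 0 ^ a) (YInf.tI d u 0 ^ b)
      (pow_mem (YInf.tI_mem (by omega)) a) (pow_mem (YInf.tI_mem (by omega)) b)
    rw [h, ← pow_add, trT]
  -- abbreviations
  set A := k₁ + k with hA
  set M := k₁ + k₂ + k with hMdef
  -- step 1: rewrite the word using the relations
  have hword : YInf.tI d u 0 ^ k₁ * YInf.tI d u 1 ^ k₂ * YInf.tI d u 2 ^ k *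
        (YInf.gI d u 0 * YInf.gI d u 1 * YInf.gI d u 0)
      = YInf.tI d u 0 ^ k₁ * YInf.tI d u 1 ^ k₂ * (YInf.gI d u 1 * YInf.gI d u 0 * YInf.gI d u 1)
          * YInf.tI d u 0 ^ k := by
    rw [YInf.braidI 0]
    have h1 : YInf.tI d u 2 ^ k * (YInf.gI d u 1 * (YInf.gI d u 0 * YInf.gI d u 1))
        = YInf.gI d u 1 * (YInf.gI d u 0 * (YInf.gI d u 1 * YInf.tI d u 0 ^ k)) := by
      rw [YInf.tIpow_gI' 1 k, YInf.tIpow_gI' 0 k,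
        ← YInf.tIpow_gI_far 1 0 k (by omega) (by omega)]
    simp only [mul_assoc]
    rw [h1]
  rw [hword]
  have e1 : YInf.tI d u 0 ^ k₁ * YInf.tI d u 1 ^ k₂ *
        (YInf.gI d u 1 * YInf.gI d u 0 * YInf.gI d u 1) * YInf.tI d u 0 ^ k
      = (YInf.tI d u 0 ^ k₁ * YInf.tI d u 1 ^ k₂ *
        (YInf.gI d u 1 * YInf.gI d u 0 * YInf.gI d u 1)) * YInf.tI d u 0 ^ k := rfl
  rw [e1, htrace _ (YInf.tI d u 0 ^ k)]
  have e2 : YInf.tI d u 0 ^ k * (YInf.tI d u 0 ^ k₁ * YInf.tI d u 1 ^ k₂ *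
        (YInf.gI d u 1 * YInf.gI d u 0 * YInf.gI d u 1))
      = YInf.tI d u 0 ^ A * YInf.tI d u 1 ^ k₂ *
        (YInf.gI d u 0 * YInf.gI d u 1 * YInf.gI d u 0) := by
    have hpow : ∀ y : YInf d u, YInf.tI d u 0 ^ k * (YInf.tI d u 0 ^ k₁ * y)
        = YInf.tI d u 0 ^ A * y := by
      intro y
      rw [← mul_assoc, ← pow_add, hA, add_comm k k₁]
    conv_rhs => rw [YInf.braidI 0]
    simp only [mul_assoc]
    rw [hpow]
  rw [e2]
  -- step 2: Markov property for g₁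
  have e3 : YInf.tI d u 0 ^ A * YInf.tI d u 1 ^ k₂ *
        (YInf.gI d u 0 * YInf.gI d u 1 * YInf.gI d u 0)
      = (YInf.tI d u 0 ^ A * YInf.tI d u 1 ^ k₂ * YInf.gI d u 0) * YInf.gI d u 1
          * YInf.gI d u 0 := by
    simp only [mul_assoc]
  have hamem : YInf.tI d u 0 ^ A * YInf.tI d u 1 ^ k₂ * YInf.gI d u 0 ∈ YInf.level d u 2 :=
    mul_mem (mul_mem (pow_mem (YInf.tI_mem (by omega)) _)
      (pow_mem (YInf.tI_mem (by omega)) _)) (YInf.gI_mem (by omega))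
  rw [e3, hmarkov 1 _ _ hamem (YInf.gI_mem (by omega))]
  -- step 3: quadratic relation
  have e4 : (YInf.tI d u 0 ^ A * YInf.tI d u 1 ^ k₂ * YInf.gI d u 0) * YInf.gI d u 0
      = YInf.tI d u 0 ^ A * YInf.tI d u 1 ^ k₂ * (YInf.gI d u 0 * YInf.gI d u 0) := by
    simp only [mul_assoc]
  rw [e4, YInf.quadI 0]
  have e5 : YInf.tI d u 0 ^ A * YInf.tI d u 1 ^ k₂ *
        (1 + (u - 1) • (YInf.eI d u 0 * (1 + YInf.gI d u 0)))
      = YInf.tI d u 0 ^ A * YInf.tI d u 1 ^ k₂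
        + (u - 1) • (YInf.tI d u 0 ^ A * YInf.tI d u 1 ^ k₂ * YInf.eI d u 0)
        + (u - 1) • (YInf.tI d u 0 ^ A * YInf.tI d u 1 ^ k₂ *
            (YInf.eI d u 0 * YInf.gI d u 0)) := by
    rw [mul_add, mul_one, mul_smul_comm, mul_add, mul_one, mul_add, smul_add, ← add_assoc,
      ← mul_assoc]
  rw [e5, map_add, map_add, map_smul, map_smul, smul_eq_mul, smul_eq_mul, trTT]
  -- term 2: the e₀ term
  have sumP : ∀ C D : ℕ, (YInf.tI d u 0 ^ C * YInf.tI d u 1 ^ D) * YInf.eI d u 0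
      = (d : ℂ)⁻¹ • ∑ m ∈ Finset.range d,
          YInf.tI d u 0 ^ (C + m) * YInf.tI d u 1 ^ (D + (d - m)) := by
    intro C D
    rw [YInf.eI_expand, mul_smul_comm, Finset.mul_sum]
    congr 1
    refine Finset.sum_congr rfl fun m _ => ?_
    exact YInf.tt_mul_tt C D m (d - m)
  have trPe : tr (YInf.tI d u 0 ^ A * YInf.tI d u 1 ^ k₂ * YInf.eI d u 0)
      = (d : ℂ)⁻¹ * ∑ m ∈ Finset.range d,
          x ((k₂ + (d - m) : ℕ) : ZMod d) * x ((A + m : ℕ) : ZMod d) := by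
    rw [sumP, map_smul, map_sum, smul_eq_mul]
    congr 1
    exact Finset.sum_congr rfl fun m _ => trTT _ _
  have sumE : YInf.eI d u 0 * YInf.tI d u 0 ^ M
      = (d : ℂ)⁻¹ • ∑ m ∈ Finset.range d,
          YInf.tI d u 0 ^ (m + M) * YInf.tI d u 1 ^ (d - m) := by
    rw [YInf.eI_expand, smul_mul_assoc, Finset.sum_mul]
    congr 1
    refine Finset.sum_congr rfl fun m _ => ?_
    have h := YInf.tt_mul_tt (d := d) (u := u) m (d - m) M 0
    simpa using h
  have trE : tr (YInf.eI d u 0 * YInf.tI d u 0 ^ M)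
      = (d : ℂ)⁻¹ * ∑ m ∈ Finset.range d,
          x (((d - m) : ℕ) : ZMod d) * x ((m + M : ℕ) : ZMod d) := by
    rw [sumE, map_smul, map_sum, smul_eq_mul]
    congr 1
    refine Finset.sum_congr rfl fun m _ => ?_
    rw [trTT]
  have hL : ∑ m ∈ Finset.range d, x ((k₂ + (d - m) : ℕ) : ZMod d) * x ((A + m : ℕ) : ZMod d)
      = ∑ s : ZMod d, x ((k₂ : ZMod d) - s) * x ((A : ZMod d) + s) := by
    rw [← YInf.sum_range_eq_sum_zmod (fun s => x ((k₂ : ZMod d) - s) * x ((A : ZMod d) + s))]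
    refine Finset.sum_congr rfl fun m hm => ?_
    have hmd : m ≤ d := le_of_lt (Finset.mem_range.mp hm)
    have h1 : ((k₂ + (d - m) : ℕ) : ZMod d) = (k₂ : ZMod d) - (m : ZMod d) := by
      push_cast [hmd]
      rw [ZMod.natCast_self]
      ring
    have h2 : ((A + m : ℕ) : ZMod d) = (A : ZMod d) + (m : ZMod d) := by push_cast; ring
    rw [h1, h2]
  have hR : ∑ m ∈ Finset.range d, x (((d - m) : ℕ) : ZMod d) * x ((m + M : ℕ) : ZMod d)
      = ∑ s : ZMod d, x (-s) * x ((M : ZMod d) + s) := by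
    rw [← YInf.sum_range_eq_sum_zmod (fun s => x (-s) * x ((M : ZMod d) + s))]
    refine Finset.sum_congr rfl fun m hm => ?_
    have hmd : m ≤ d := le_of_lt (Finset.mem_range.mp hm)
    have h1 : (((d - m) : ℕ) : ZMod d) = -(m : ZMod d) := by
      push_cast [hmd]
      rw [ZMod.natCast_self]
      ring
    have h2 : ((m + M : ℕ) : ZMod d) = (M : ZMod d) + (m : ZMod d) := by push_cast; ring
    rw [h1, h2]
  have hMAB : ((M : ℕ) : ZMod d) = (A : ZMod d) + (k₂ : ZMod d) := by
    have : M = A + k₂ := by omega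
    rw [this]
    push_cast
    ring
  have hLR : ∑ s : ZMod d, x ((k₂ : ZMod d) - s) * x ((A : ZMod d) + s)
      = ∑ s : ZMod d, x (-s) * x ((M : ZMod d) + s) := by
    refine (Fintype.sum_equiv (Equiv.addRight ((k₂ : ZMod d)))
      (fun s => x (-s) * x ((M : ZMod d) + s))
      (fun s => x ((k₂ : ZMod d) - s) * x ((A : ZMod d) + s)) fun s => ?_).symm
    simp only [Equiv.coe_addRight]
    rw [hMAB]
    congr 2 <;> ring
  have hterm2 : tr (YInf.tI d u 0 ^ A * YInf.tI d u 1 ^ k₂ * YInf.eI d u 0)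
      = tr (YInf.eI d u 0 * YInf.tI d u 0 ^ M) := by
    rw [trPe, trE, hL, hR, hLR]
  rw [hterm2]
  -- term 3
  have sumPG : YInf.tI d u 0 ^ A * YInf.tI d u 1 ^ k₂ * (YInf.eI d u 0 * YInf.gI d u 0)
      = (d : ℂ)⁻¹ • ∑ m ∈ Finset.range d,
          (YInf.tI d u 0 ^ (A + m) * YInf.gI d u 0) * YInf.tI d u 0 ^ (k₂ + (d - m)) := by
    rw [← mul_assoc, sumP, smul_mul_assoc, Finset.sum_mul]
    congr 1
    refine Finset.sum_congr rfl fun m _ => ?_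
    rw [mul_assoc, YInf.tIpow_gI 0, ← mul_assoc]
  have hterm3 : tr (YInf.tI d u 0 ^ A * YInf.tI d u 1 ^ k₂ *
        (YInf.eI d u 0 * YInf.gI d u 0)) = z * x ((M : ℕ) : ZMod d) := by
    rw [sumPG, map_smul, map_sum, smul_eq_mul]
    have hconst : ∀ m ∈ Finset.range d,
        tr ((YInf.tI d u 0 ^ (A + m) * YInf.gI d u 0) * YInf.tI d u 0 ^ (k₂ + (d - m)))
          = z * x ((M : ℕ) : ZMod d) := by
      intro m hm
      have hmd : m ≤ d := le_of_lt (Finset.mem_range.mp hm)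
      rw [trTGT]
      have hcd : ((A + m + (k₂ + (d - m)) : ℕ) : ZMod d) = ((M : ℕ) : ZMod d) := by
        have h1 : A + m + (k₂ + (d - m)) = M + d := by omega
        rw [h1]
        push_cast
        rw [ZMod.natCast_self]
        ring
      rw [hcd]
    rw [Finset.sum_congr rfl hconst, Finset.sum_const, Finset.card_range, nsmul_eq_mul,
      ← mul_assoc, inv_mul_cancel₀ hdC, one_mul]
  rw [hterm3]
  ring
end
end

section
/- For d = 1, the condition that the Ocneanu trace on the Hecke algebras H_n(q) annihilates G_1 G_2 G_1 + G_1 G_2 + G_2 G_1 + G_1 + G_2 + 1 forces z = -1/(q+1) or z = -1. -/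
noncomputable section

namespace HeckeInf

/-- Defining relations of the Iwahori–Hecke algebras on infinitely many strands
(generators `G_i`, `i ∈ ℕ`, 0-based): braid relations and `G_i² = (q-1) G_i + q`. -/
inductive Rel (q : ℂ) : FreeAlgebra ℂ ℕ → FreeAlgebra ℂ ℕ → Prop
  | far (i j : ℕ) (h : i + 1 < j ∨ j + 1 < i) :
      Rel q (FreeAlgebra.ι ℂ i * FreeAlgebra.ι ℂ j) (FreeAlgebra.ι ℂ j * FreeAlgebra.ι ℂ i)
  | braid (i : ℕ) :
      Rel q (FreeAlgebra.ι ℂ i * FreeAlgebra.ι ℂ (i + 1) * FreeAlgebra.ι ℂ i)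
        (FreeAlgebra.ι ℂ (i + 1) * FreeAlgebra.ι ℂ i * FreeAlgebra.ι ℂ (i + 1))
  | quad (i : ℕ) :
      Rel q (FreeAlgebra.ι ℂ i * FreeAlgebra.ι ℂ i) ((q - 1) • FreeAlgebra.ι ℂ i + q • 1)

end HeckeInf

/-- The inductive-limit Iwahori–Hecke algebra `H_∞(q) = ⋃ₙ H_n(q)`. -/
abbrev HeckeInf (q : ℂ) := RingQuot (HeckeInf.Rel q)

namespace HeckeInf

/-- The generator `G_i` of `H_∞(q)` (0-based index). -/
def gH (q : ℂ) (i : ℕ) : HeckeInf q := RingQuot.mkAlgHom ℂ (Rel q) (FreeAlgebra.ι ℂ i)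

/-- The subalgebra `H_m(q) ⊆ H_∞(q)` generated by `G_0, …, G_{m-2}` (0-based;
paper generators `G_1, …, G_{m-1}`). -/
def level (q : ℂ) (m : ℕ) : Subalgebra ℂ (HeckeInf q) :=
  Algebra.adjoin ℂ {x | ∃ i, i + 1 < m ∧ x = gH q i}

end HeckeInf

/-- For `d = 1`: if the Ocneanu trace on the Hecke algebras `H_n(q)`
annihilates `G_1 G_2 G_1 + G_1 G_2 + G_2 G_1 + G_1 + G_2 + 1` (0-based:
`G_0 G_1 G_0 + …`), then `z = -1/(q+1)` or `z = -1`. -/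
theorem ocneanu_trace_tl_values (q : ℂ) (hq0 : q ≠ 0) (hq1 : q ≠ 1) (hqm1 : q ≠ -1)
    (z : ℂ) (tr : HeckeInf q →ₗ[ℂ] ℂ)
    (htrace : ∀ a b : HeckeInf q, tr (a * b) = tr (b * a))
    (hone : tr 1 = 1)
    (hmarkov : ∀ m : ℕ, ∀ a ∈ HeckeInf.level q (m + 1),
      tr (a * HeckeInf.gH q m) = z * tr a)
    (hann : tr (HeckeInf.gH q 0 * HeckeInf.gH q 1 * HeckeInf.gH q 0
        + HeckeInf.gH q 0 * HeckeInf.gH q 1 + HeckeInf.gH q 1 * HeckeInf.gH q 0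
        + HeckeInf.gH q 0 + HeckeInf.gH q 1 + 1) = 0) :
    z = -1 / (q + 1) ∨ z = -1 := by
  have hq1' : q + 1 ≠ 0 := fun h => hqm1 (by linear_combination h)
  -- quadratic relation in the quotient
  have hquad : HeckeInf.gH q 0 * HeckeInf.gH q 0
      = (q - 1) • HeckeInf.gH q 0 + q • (1 : HeckeInf q) := by
    have := RingQuot.mkAlgHom_rel ℂ (HeckeInf.Rel.quad (q := q) 0)
    simpa [HeckeInf.gH, map_mul, map_add, map_smul, map_one] using this
  -- basic trace values
  have h0 : tr (HeckeInf.gH q 0) = z := by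
    have := hmarkov 0 1 (one_mem _)
    simpa [hone] using this
  have h1 : tr (HeckeInf.gH q 1) = z := by
    have := hmarkov 1 1 (one_mem _)
    simpa [hone] using this
  have hmem : HeckeInf.gH q 0 ∈ HeckeInf.level q 2 :=
    Algebra.subset_adjoin ⟨0, by norm_num, rfl⟩
  have h01 : tr (HeckeInf.gH q 0 * HeckeInf.gH q 1) = z * z := by
    have := hmarkov 1 (HeckeInf.gH q 0) hmem
    rw [this, h0]
  have h10 : tr (HeckeInf.gH q 1 * HeckeInf.gH q 0) = z * z := by
    rw [htrace, h01]
  have h010 : tr (HeckeInf.gH q 0 * HeckeInf.gH q 1 * HeckeInf.gH q 0)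
      = (q - 1) * (z * z) + q * z := by
    rw [htrace]
    rw [← mul_assoc, hquad, add_mul, smul_mul_assoc, smul_mul_assoc, one_mul,
      map_add, map_smul, map_smul, h01, h1]
    simp [smul_eq_mul]
  have key : (q + 1) * (z * z) + (q + 2) * z + 1 = 0 := by
    rw [map_add, map_add, map_add, map_add, map_add, h010, h01, h10, h0, h1, hone] at hann
    linear_combination hann
  have hfac : ((q + 1) * z + 1) * (z + 1) = 0 := by linear_combination key
  rcases mul_eq_zero.mp hfac with h | h
  · left
    rw [eq_div_iff hq1']
    linear_combination h
  · right
    linear_combination h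

end
end
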